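/- Let F be a class of symmetric distributions on ℝ with center of symmetry C : F → ℝ, i.e., F(C(F) + x) = 1 − F((C(F) − x)−) for all F ∈ F and x ∈ ℝ. Let Φ : ℝ → ℝ be convex and even, and set S(x,y) = Φ(x − y). For x ∈ ℝ define Ψ_x : ℝ → ℝ by Ψ_x(y) = (1/2)(Φ(x − y) + Φ(−x − y)), and for x, z ∈ ℝ set M_{x,z} = {y ∈ ℝ : Ψ_x(y) − Ψ_z(y) > 0}. Assume the necessary integrability so that S̄(x,F) is finite. If for all F ∈ F and all x, z ∈ ℝ with |x| > |z| one has P(Y − C(F) ∈ M_{x,z}) > 0 for Y ∼ F, then S is strictly metrically F-order-sensitive for C. In particular, if for all F ∈ F and all x ≠ 0 one has P(Y − C(F) ∈ M_{x,0}) > 0, then S is strictly F-consistent for C. -/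

import Mathlib

open MeasureTheory ENNReal

noncomputable def escore {α Ω : Type*} [MeasurableSpace Ω]
    (S : α → Ω → ℝ) (x : α) (F : Measure Ω) : ℝ :=
  ∫ y, S x y ∂F

/-- The mixture `(1 - lam) • F + lam • G` of two measures. -/
noncomputable def mix {Ω : Type*} [MeasurableSpace Ω]
    (F G : Measure Ω) (lam : ℝ) : Measure Ω :=
  ENNReal.ofReal (1 - lam) • F + ENNReal.ofReal lam • G

/-- The class `𝓕` is convex (closed under mixtures). -/
def MixConvex {Ω : Type*} [MeasurableSpace Ω] (𝓕 : Set (Measure Ω)) : Prop :=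
  ∀ F ∈ 𝓕, ∀ G ∈ 𝓕, ∀ lam ∈ Set.Icc (0:ℝ) 1, mix F G lam ∈ 𝓕

/-- `S` is an `𝓕`-consistent scoring function for `T` on the action domain `A`. -/
def Consistent {α Ω : Type*} [MeasurableSpace Ω]
    (𝓕 : Set (Measure Ω)) (A : Set α) (T : Measure Ω → α) (S : α → Ω → ℝ) : Prop :=
  ∀ F ∈ 𝓕, ∀ x ∈ A, escore S (T F) F ≤ escore S x F

/-- `S` is a strictly `𝓕`-consistent scoring function for `T` on the action domain `A`. -/
def StrictlyConsistent {α Ω : Type*} [MeasurableSpace Ω]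
    (𝓕 : Set (Measure Ω)) (A : Set α) (T : Measure Ω → α) (S : α → Ω → ℝ) : Prop :=
  Consistent 𝓕 A T S ∧
    ∀ F ∈ 𝓕, ∀ x ∈ A, escore S x F = escore S (T F) F → x = T F

/-- The `ℓ^p`-norm on `ℝ^k`, for `p ∈ [1, ∞]` (given as an extended real). -/
noncomputable def lpNorm {k : ℕ} (p : ℝ≥0∞) (x : Fin k → ℝ) : ℝ :=
  if p = ⊤ then ⨆ i, |x i| else (∑ i, |x i| ^ p.toReal) ^ (1 / p.toReal)

/-- `S` is metrically `𝓕`-order-sensitive for `T` relative to the norm `nrm`. -/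
def MetricallyOS {α Ω : Type*} [MeasurableSpace Ω] [Sub α]
    (𝓕 : Set (Measure Ω)) (A : Set α) (T : Measure Ω → α)
    (S : α → Ω → ℝ) (nrm : α → ℝ) : Prop :=
  ∀ F ∈ 𝓕, ∀ x ∈ A, ∀ z ∈ A,
    nrm (x - T F) ≤ nrm (z - T F) → escore S x F ≤ escore S z F

/-- `S` is strictly metrically `𝓕`-order-sensitive for `T` relative to the norm `nrm`. -/
def StrictlyMetricallyOS {α Ω : Type*} [MeasurableSpace Ω] [Sub α]
    (𝓕 : Set (Measure Ω)) (A : Set α) (T : Measure Ω → α)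
    (S : α → Ω → ℝ) (nrm : α → ℝ) : Prop :=
  MetricallyOS 𝓕 A T S nrm ∧
    ∀ F ∈ 𝓕, ∀ x ∈ A, ∀ z ∈ A,
      nrm (x - T F) < nrm (z - T F) → escore S x F < escore S z F

/-- `Ψ_x(y) = (Φ(x − y) + Φ(−x − y)) / 2`. -/
noncomputable def Psi (Φ : ℝ → ℝ) (x y : ℝ) : ℝ := (Φ (x - y) + Φ (-x - y)) / 2

/-! Symmetry of `μ` about `c = C μ` means that the reflection `y ↦ 2c - y` preserves `μ`; together
with the evenness of `Φ` this turns the expected score of `x` into `∫ Ψ_{x-c}(y - c) dμ(y)`.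
For fixed `w`, `t ↦ Ψ_t(w)` is convex and even, hence nondecreasing in `|t|`, which gives
order sensitivity; the positive mass of `M_{x,z}` makes the comparison strict. -/

open Set

lemma integral_lt_integral_of_le_of_measure_pos {α : Type*} [MeasurableSpace α] {μ : Measure α}
    {f g : α → ℝ} (hf : Integrable f μ) (hg : Integrable g μ) (hle : f ≤ g)
    (hpos : 0 < μ {y | 0 < g y - f y}) : ∫ y, f y ∂μ < ∫ y, g y ∂μ := by
  have hsupp : {y | 0 < g y - f y} ⊆ Function.support (g - f) := fun y hy => hy.ne'
  have : 0 < ∫ y, (g - f) y ∂μ :=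
    (integral_pos_iff_support_of_nonneg (sub_nonneg.2 hle) (hg.sub hf)).2
      (hpos.trans_le (measure_mono hsupp))
  rw [integral_sub' hg hf] at this
  linarith

section Psi

variable {Φ : ℝ → ℝ}

lemma convexOn_psi (hΦconv : ConvexOn ℝ univ Φ) (w : ℝ) : ConvexOn ℝ univ (Psi Φ · w) := by
  have h₁ : ConvexOn ℝ univ fun x => Φ (x - w) :=
    hΦconv.comp_affineMap (AffineMap.id ℝ ℝ - AffineMap.const ℝ ℝ w)
  have h₂ : ConvexOn ℝ univ fun x => Φ (-x - w) :=
    hΦconv.comp_affineMap (-AffineMap.id ℝ ℝ - AffineMap.const ℝ ℝ w)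
  simpa [Psi, div_eq_inv_mul] using (h₁.add h₂).smul (by norm_num : (0:ℝ) ≤ 2⁻¹)

lemma psi_neg (x w : ℝ) : Psi Φ (-x) w = Psi Φ x w := by
  rw [Psi, Psi, neg_neg, add_comm]

lemma psi_le_psi_of_abs_le (hΦconv : ConvexOn ℝ univ Φ) {a b : ℝ} (h : |a| ≤ |b|) (w : ℝ) :
    Psi Φ a w ≤ Psi Φ b w := by
  have hb : Psi Φ |b| w = Psi Φ b w := by
    rcases abs_choice b with hb | hb <;> rw [hb]
    exact psi_neg b w
  have hseg : a ∈ segment ℝ (-|b|) |b| := by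
    rw [segment_eq_Icc (neg_le_self (abs_nonneg b))]
    exact abs_le.mp h
  simpa [psi_neg, hb] using (convexOn_psi hΦconv w).le_on_segment (mem_univ _) (mem_univ _) hseg

variable {μ : Measure ℝ}

lemma integrable_psi (hint : ∀ x, Integrable (fun y => Φ (x - y)) μ) (a c : ℝ) :
    Integrable (fun y => Psi Φ a (y - c)) μ := by
  refine (((hint (a + c)).add (hint (c - a))).div_const 2).congr (ae_of_all _ fun y => ?_)
  simp only [Pi.add_apply, Psi]
  ring_nf

lemma integral_psi_le_integral_psi (hΦconv : ConvexOn ℝ univ Φ)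
    (hint : ∀ x, Integrable (fun y => Φ (x - y)) μ) {a b : ℝ} (h : |a| ≤ |b|) (c : ℝ) :
    ∫ y, Psi Φ a (y - c) ∂μ ≤ ∫ y, Psi Φ b (y - c) ∂μ :=
  integral_mono (integrable_psi hint a c) (integrable_psi hint b c)
    fun y => psi_le_psi_of_abs_le hΦconv h (y - c)

lemma integral_psi_lt_integral_psi (hΦconv : ConvexOn ℝ univ Φ)
    (hint : ∀ x, Integrable (fun y => Φ (x - y)) μ) {a b : ℝ} (h : |a| ≤ |b|) (c : ℝ)
    (hpos : 0 < μ {y | 0 < Psi Φ b (y - c) - Psi Φ a (y - c)}) :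
    ∫ y, Psi Φ a (y - c) ∂μ < ∫ y, Psi Φ b (y - c) ∂μ :=
  integral_lt_integral_of_le_of_measure_pos (integrable_psi hint a c) (integrable_psi hint b c)
    (fun y => psi_le_psi_of_abs_le hΦconv h (y - c)) hpos

end Psi

lemma measurePreserving_subLeft_of_symm {μ : Measure ℝ} [IsProbabilityMeasure μ] {c : ℝ}
    (hsym : ∀ x, (μ (Iic (c + x))).toReal = 1 - (μ (Iio (c - x))).toReal) :
    MeasurePreserving (MeasurableEquiv.subLeft (2 * c)) μ μ := by
  refine ⟨(MeasurableEquiv.subLeft (2 * c)).measurable, ?_⟩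
  have : IsProbabilityMeasure (μ.map (MeasurableEquiv.subLeft (2 * c))) :=
    Measure.isProbabilityMeasure_map (MeasurableEquiv.subLeft (2 * c)).measurable.aemeasurable
  refine Measure.ext_of_Iic _ _ fun t => ?_
  have hpre : MeasurableEquiv.subLeft (2 * c) ⁻¹' Iic t = Ici (2 * c - t) := by
    ext y
    exact sub_le_comm (a := 2 * c)
  rw [MeasurableEquiv.map_apply, hpre, ← compl_Iio, prob_compl_eq_one_sub measurableSet_Iio,
    ← ENNReal.toReal_eq_toReal_iff' (by simp) (measure_ne_top μ _),
    ENNReal.toReal_sub_of_le prob_le_one one_ne_top, ENNReal.toReal_one,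
    show 2 * c - t = c - (t - c) by ring, ← hsym, add_sub_cancel]

lemma escore_eq_integral_psi {Φ : ℝ → ℝ} (hΦeven : Function.Even Φ) {μ : Measure ℝ} {c : ℝ}
    (hμ : MeasurePreserving (MeasurableEquiv.subLeft (2 * c)) μ μ)
    (hint : ∀ x, Integrable (fun y => Φ (x - y)) μ) (x : ℝ) :
    escore (fun x y => Φ (x - y)) x μ = ∫ y, Psi Φ (x - c) (y - c) ∂μ := by
  have hreflect : ∫ y, Φ (2 * c - x - y) ∂μ = ∫ y, Φ (x - y) ∂μ := by
    rw [← hμ.integral_comp' fun y => Φ (x - y)]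
    refine integral_congr_ae (ae_of_all _ fun y => ?_)
    change Φ (2 * c - x - y) = Φ (x - (2 * c - y))
    rw [← hΦeven]
    ring_nf
  have hpsi : ∀ y, Psi Φ (x - c) (y - c) = (Φ (x - y) + Φ (2 * c - x - y)) / 2 := fun y => by
    simp only [Psi]
    ring_nf
  simp only [escore, hpsi]
  rw [integral_div, integral_add (hint x) (hint _), hreflect]
  ring

/-- Let all `μ ∈ 𝓕` be symmetric with center of symmetry `C`, let `Φ`
be convex and even, and `S(x,y) = Φ(x − y)`. If the sets `M_{x,z}` (shifted by `C μ`)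
carry positive probability whenever `|x| > |z|`, then `S` is strictly metrically
`𝓕`-order-sensitive for `C`; in particular, under the corresponding hypothesis with
`z = 0`, `S` is strictly `𝓕`-consistent for `C`. -/
theorem statement14
    (𝓕 : Set (Measure ℝ)) (hprob : ∀ μ ∈ 𝓕, IsProbabilityMeasure μ)
    (C : Measure ℝ → ℝ)
    (hsym : ∀ μ ∈ 𝓕, ∀ x : ℝ,
      (μ (Set.Iic (C μ + x))).toReal = 1 - (μ (Set.Iio (C μ - x))).toReal)
    (Φ : ℝ → ℝ) (hΦconv : ConvexOn ℝ Set.univ Φ) (hΦeven : ∀ t : ℝ, Φ (-t) = Φ t)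
    (hint : ∀ x : ℝ, ∀ μ ∈ 𝓕, Integrable (fun y => Φ (x - y)) μ) :
    ((∀ μ ∈ 𝓕, ∀ x z : ℝ, |z| < |x| →
        0 < μ {y : ℝ | 0 < Psi Φ x (y - C μ) - Psi Φ z (y - C μ)}) →
      StrictlyMetricallyOS 𝓕 Set.univ C (fun x y => Φ (x - y)) (fun t => |t|)) ∧
    ((∀ μ ∈ 𝓕, ∀ x : ℝ, x ≠ 0 →
        0 < μ {y : ℝ | 0 < Psi Φ x (y - C μ) - Psi Φ 0 (y - C μ)}) →
      StrictlyConsistent 𝓕 Set.univ C (fun x y => Φ (x - y))) := by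
  have hescore : ∀ μ ∈ 𝓕, ∀ x, escore (fun x y => Φ (x - y)) x μ =
      ∫ y, Psi Φ (x - C μ) (y - C μ) ∂μ := fun μ hμ x =>
    have := hprob μ hμ
    escore_eq_integral_psi hΦeven (measurePreserving_subLeft_of_symm (hsym μ hμ)) (hint · μ hμ) x
  have hle : ∀ μ ∈ 𝓕, ∀ x z, |x - C μ| ≤ |z - C μ| →
      escore (fun x y => Φ (x - y)) x μ ≤ escore (fun x y => Φ (x - y)) z μ := by
    intro μ hμ x z h
    rw [hescore μ hμ, hescore μ hμ]
    exact integral_psi_le_integral_psi hΦconv (hint · μ hμ) h (C μ)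
  have hlt : ∀ μ ∈ 𝓕, ∀ x z, |x - C μ| ≤ |z - C μ| →
      0 < μ {y | 0 < Psi Φ (z - C μ) (y - C μ) - Psi Φ (x - C μ) (y - C μ)} →
      escore (fun x y => Φ (x - y)) x μ < escore (fun x y => Φ (x - y)) z μ := by
    intro μ hμ x z h hpos
    rw [hescore μ hμ, hescore μ hμ]
    exact integral_psi_lt_integral_psi hΦconv (hint · μ hμ) h (C μ) hpos
  refine ⟨fun hM => ⟨fun μ hμ x _ z _ h => hle μ hμ x z h,
    fun μ hμ x _ z _ h => hlt μ hμ x z h.le (hM μ hμ _ _ h)⟩, fun hM => ⟨?_, ?_⟩⟩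
  · intro μ hμ x _
    exact hle μ hμ (C μ) x (by simp)
  · intro μ hμ x _ heq
    by_contra hne
    have hx : x - C μ ≠ 0 := sub_ne_zero.2 hne
    refine (hlt μ hμ (C μ) x (by simp) ?_).ne' heq
    simpa using hM μ hμ _ hx
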